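/- arXiv:2603.19774 — 2 statements merged into one kernel-verified Lean document; each statement's English description precedes it below -/
import Mathlib

section
/- Let N ≥ 4 and let θ(1),…,θ(N) be i.i.d. random variables uniformly distributed on [−π,π), regarded as a configuration on the ring with wrapped increments δ(i) := wrap_π(θ(i+1) − θ(i)) (indices cyclic). Fix an edge (k,k+1). Then the probability that |δ(k−1) + δ(k)/2| > π or |δ(k+1) + δ(k)/2| > π equals 11/48. -/
open Real MeasureTheory ProbabilityTheory

/-- The wrap operator `wrap_π(a) = a - 2π⌊(a+π)/(2π)⌋`, taking values in `[-π, π)`. -/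
noncomputable def wrapPi (a : ℝ) : ℝ := a - 2 * π * ⌊(a + π) / (2 * π)⌋

section Aux
open Set intervalIntegral
open scoped ENNReal

lemma wrapPi_eq_toIcoMod (a : ℝ) : wrapPi a = toIcoMod Real.two_pi_pos (-π) a := by
  rw [toIcoMod, toIcoDiv_eq_floor, wrapPi]
  rw [zsmul_eq_mul]; ring_nf

lemma wrapPi_mem_Ico (a : ℝ) : wrapPi a ∈ Ico (-π) π := by
  rw [wrapPi_eq_toIcoMod]
  have := toIcoMod_mem_Ico Real.two_pi_pos (-π) a
  simpa [(by ring : -π + 2*π = π)] using this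

lemma wrapPi_eq_self {a : ℝ} (h : a ∈ Ico (-π) π) : wrapPi a = a := by
  rw [wrapPi_eq_toIcoMod]
  exact (toIcoMod_eq_self Real.two_pi_pos).2 (by simpa [(by ring : -π + 2*π = π)] using h)

lemma measurable_wrapPi : Measurable wrapPi := by
  unfold wrapPi
  exact measurable_id.sub
    ((measurable_from_top.comp (((measurable_id.add_const π).div_const _).floor)).const_mul _)

section Wrap
local instance fact_two_pi_pos : Fact (0 < 2*π) := ⟨Real.two_pi_pos⟩

lemma wrapPi_eq_equivIco (y : ℝ) :
    wrapPi y = (AddCircle.equivIco (2*π) (-π) (↑y) : ℝ) := by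
  rw [wrapPi_eq_toIcoMod]
  rfl

/-- Lift of `f` to the circle. -/
noncomputable def wrapF (f : ℝ → ℝ≥0∞) : AddCircle (2*π) → ℝ≥0∞ :=
  fun u => f ((AddCircle.equivIco (2*π) (-π) u : ℝ))

lemma wrapF_measurable {f : ℝ → ℝ≥0∞} (hf : Measurable f) : Measurable (wrapF f) :=
  hf.comp (measurable_subtype_coe.comp (AddCircle.measurableEquivIco (2*π) (-π)).measurable)

lemma wrapF_coe (f : ℝ → ℝ≥0∞) (y : ℝ) : wrapF f (↑y) = f (wrapPi y) := by
  rw [wrapPi_eq_equivIco]; rfl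

lemma lintegral_Ico_eq_addCircle (F : AddCircle (2*π) → ℝ≥0∞) :
    ∫⁻ x in Ico (-π) π, F ↑x = ∫⁻ u, F u := by
  rw [setLIntegral_congr (Ico_ae_eq_Ioc (μ := (volume : Measure ℝ)))]
  have h2 : π = -π + 2*π := by ring
  rw [show (Ioc (-π) π : Set ℝ) = Ioc (-π) (-π + 2*π) by rw [← h2]]
  exact AddCircle.lintegral_preimage (2*π) (-π) F

/-- Master translation lemma: integrating `f (wrapPi (c + x))` over a period is the
same as integrating `f`. -/
lemma lintegral_wrap_add (c : ℝ) {f : ℝ → ℝ≥0∞} (hf : Measurable f) :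
    ∫⁻ x in Ico (-π) π, f (wrapPi (c + x)) = ∫⁻ x in Ico (-π) π, f x := by
  have key : ∀ x : ℝ, f (wrapPi (c + x)) = wrapF f (↑c + ↑x) := fun x => by
    rw [show ((c:AddCircle (2*π)) + (x:AddCircle (2*π))) = ((c+x : ℝ) : AddCircle (2*π)) by
      norm_cast]
    exact (wrapF_coe f (c+x)).symm
  calc ∫⁻ x in Ico (-π) π, f (wrapPi (c + x))
      = ∫⁻ x in Ico (-π) π, wrapF f (↑c + ↑x) := by simp_rw [key]
    _ = ∫⁻ u, wrapF f (↑c + u) := lintegral_Ico_eq_addCircle (fun u => wrapF f (↑c + u))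
    _ = ∫⁻ u, wrapF f u := lintegral_add_left_eq_self (wrapF f) _
    _ = ∫⁻ x in Ico (-π) π, wrapF f ↑x := (lintegral_Ico_eq_addCircle _).symm
    _ = ∫⁻ x in Ico (-π) π, f x := by
        refine setLIntegral_congr_fun measurableSet_Ico (fun x hx => ?_)
        rw [wrapF_coe, wrapPi_eq_self hx]

/-- Reflected translation lemma. -/
lemma lintegral_wrap_sub (c : ℝ) {f : ℝ → ℝ≥0∞} (hf : Measurable f) :
    ∫⁻ x in Ico (-π) π, f (wrapPi (c - x)) = ∫⁻ x in Ico (-π) π, f x := by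
  have key : ∀ x : ℝ, f (wrapPi (c - x)) = wrapF f (↑c + (-↑x)) := fun x => by
    rw [show ((c:AddCircle (2*π)) + (-(x:AddCircle (2*π)))) = ((c-x : ℝ) : AddCircle (2*π)) by
      rw [← AddCircle.coe_neg, ← AddCircle.coe_add, sub_eq_add_neg]]
    exact (wrapF_coe f (c-x)).symm
  have hneg : MeasurePreserving (fun u : AddCircle (2*π) => -u) volume volume :=
    ⟨measurable_neg, Measure.map_neg_eq_self _⟩
  calc ∫⁻ x in Ico (-π) π, f (wrapPi (c - x))
      = ∫⁻ x in Ico (-π) π, wrapF f (↑c + (-↑x)) := by simp_rw [key]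
    _ = ∫⁻ u, wrapF f (↑c + (-u)) := lintegral_Ico_eq_addCircle (fun u => wrapF f (↑c + (-u)))
    _ = ∫⁻ u, wrapF f (↑c + u) :=
        hneg.lintegral_comp ((wrapF_measurable hf).comp (measurable_const_add _))
    _ = ∫⁻ u, wrapF f u := lintegral_add_left_eq_self (wrapF f) _
    _ = ∫⁻ x in Ico (-π) π, wrapF f ↑x := (lintegral_Ico_eq_addCircle _).symm
    _ = ∫⁻ x in Ico (-π) π, f x := by
        refine setLIntegral_congr_fun measurableSet_Ico (fun x hx => ?_)
        rw [wrapF_coe, wrapPi_eq_self hx]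

end Wrap

/-- The uniform measure on `[-π, π)`. -/
noncomputable def unifM : Measure ℝ := ProbabilityTheory.cond volume (Ico (-π) π)

lemma volume_Ico_pi : volume (Ico (-π) π) = ENNReal.ofReal (2*π) := by
  rw [Real.volume_Ico]; ring_nf

lemma unifM_apply (t : Set ℝ) : unifM t = (ENNReal.ofReal (2*π))⁻¹ * volume (Ico (-π) π ∩ t) := by
  rw [unifM, cond_apply measurableSet_Ico, volume_Ico_pi]

instance unifM_prob : IsProbabilityMeasure unifM := by
  rw [unifM]
  refine cond_isProbabilityMeasure_of_finite ?_ ?_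
  · rw [volume_Ico_pi, Ne, ENNReal.ofReal_eq_zero, not_le]; positivity
  · rw [volume_Ico_pi]; exact ENNReal.ofReal_ne_top

lemma lintegral_unifM (f : ℝ → ℝ≥0∞) :
    ∫⁻ x, f x ∂unifM = (ENNReal.ofReal (2*π))⁻¹ * ∫⁻ x in Ico (-π) π, f x := by
  rw [unifM, ProbabilityTheory.cond, lintegral_smul_measure, volume_Ico_pi, smul_eq_mul]

lemma volume_slice {z : ℝ} (hz : z ∈ Ico (-π) π) :
    volume (Ico (-π) π ∩ {x : ℝ | π < |x + z/2|}) = ENNReal.ofReal (|z|/2) := by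
  obtain ⟨hz1, hz2⟩ := hz
  have hpi := Real.pi_pos
  rcases le_or_gt 0 z with hz0 | hz0
  · have hset : Ico (-π) π ∩ {x : ℝ | π < |x + z/2|} = Ioo (π - z/2) π := by
      ext x
      simp only [mem_inter_iff, mem_Ico, mem_setOf_eq, mem_Ioo, lt_abs]
      constructor
      · rintro ⟨⟨h1, h2⟩, h3 | h3⟩
        · constructor <;> linarith
        · exfalso; rw [lt_neg] at h3; linarith
      · rintro ⟨h1, h2⟩
        exact ⟨⟨by linarith, h2⟩, Or.inl (by linarith)⟩
    rw [hset, Real.volume_Ioo, abs_of_nonneg hz0]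
    congr 1; ring
  · have hset : Ico (-π) π ∩ {x : ℝ | π < |x + z/2|} = Ico (-π) (-π - z/2) := by
      ext x
      simp only [mem_inter_iff, mem_Ico, mem_setOf_eq, lt_abs]
      constructor
      · rintro ⟨⟨h1, h2⟩, h3 | h3⟩
        · exfalso; linarith
        · rw [lt_neg] at h3; exact ⟨h1, by linarith⟩
      · rintro ⟨h1, h2⟩
        refine ⟨⟨h1, by linarith⟩, Or.inr ?_⟩
        rw [lt_neg]; linarith
    rw [hset, Real.volume_Ico, abs_of_neg hz0]
    congr 1; ring

lemma lintegral_unifM_wrap_add (c : ℝ) {f : ℝ → ℝ≥0∞} (hf : Measurable f) :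
    ∫⁻ x, f (wrapPi (x - c)) ∂unifM = ∫⁻ x, f x ∂unifM := by
  rw [lintegral_unifM, lintegral_unifM]
  congr 1
  simp_rw [sub_eq_neg_add]
  exact lintegral_wrap_add (-c) hf

lemma lintegral_unifM_wrap_sub (b : ℝ) {f : ℝ → ℝ≥0∞} (hf : Measurable f) :
    ∫⁻ x, f (wrapPi (b - x)) ∂unifM = ∫⁻ x, f x ∂unifM := by
  rw [lintegral_unifM, lintegral_unifM]
  congr 1
  exact lintegral_wrap_sub b hf

lemma unifM_preimage_wrap_add (c : ℝ) {s : Set ℝ} (hs : MeasurableSet s) :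
    unifM {x | wrapPi (x - c) ∈ s} = unifM s := by
  have h1 : MeasurableSet {x | wrapPi (x - c) ∈ s} :=
    (measurable_wrapPi.comp (measurable_id.sub_const c)) hs
  rw [← lintegral_indicator_one h1, ← lintegral_indicator_one hs]
  have : ∀ x, ({x | wrapPi (x - c) ∈ s}).indicator (1 : ℝ → ℝ≥0∞) x
      = s.indicator (1 : ℝ → ℝ≥0∞) (wrapPi (x - c)) := by
    intro x
    by_cases h : wrapPi (x - c) ∈ s <;> simp [indicator, h]
  simp_rw [this]
  exact lintegral_unifM_wrap_add c (measurable_one.indicator hs)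

lemma unifM_preimage_wrap_sub (b : ℝ) {s : Set ℝ} (hs : MeasurableSet s) :
    unifM {x | wrapPi (b - x) ∈ s} = unifM s := by
  have h1 : MeasurableSet {x | wrapPi (b - x) ∈ s} :=
    (measurable_wrapPi.comp (measurable_const.sub measurable_id)) hs
  rw [← lintegral_indicator_one h1, ← lintegral_indicator_one hs]
  have : ∀ x, ({x | wrapPi (b - x) ∈ s}).indicator (1 : ℝ → ℝ≥0∞) x
      = s.indicator (1 : ℝ → ℝ≥0∞) (wrapPi (b - x)) := by
    intro x
    by_cases h : wrapPi (b - x) ∈ s <;> simp [indicator, h]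
  simp_rw [this]
  exact lintegral_unifM_wrap_sub b (measurable_one.indicator hs)

lemma measurableSet_sZ (z : ℝ) : MeasurableSet {x : ℝ | π < |x + z/2|} :=
  measurableSet_lt measurable_const ((measurable_id.add_const _).abs)

lemma unifM_sZ {z : ℝ} (hz : z ∈ Ico (-π) π) :
    unifM {x : ℝ | π < |x + z/2|} = ENNReal.ofReal (|z|/(4*π)) := by
  rw [unifM_apply, volume_slice hz, ← ENNReal.ofReal_inv_of_pos Real.two_pi_pos,
    ← ENNReal.ofReal_mul (by positivity)]
  have := Real.pi_pos
  congr 1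
  rw [inv_mul_eq_div, div_eq_div_iff (by positivity) (by positivity)]
  ring

/-- `q z` is the probability that a branch-crossing occurs at one neighbouring edge. -/
noncomputable def qq (z : ℝ) : ℝ≥0∞ := ENNReal.ofReal (|z|/(4*π))

lemma measurable_qq : Measurable qq :=
  ENNReal.measurable_ofReal.comp ((measurable_abs).div_const _)

/-- The density function after integrating out the two outer variables. -/
noncomputable def hfun (z : ℝ) : ℝ := |z|/(2*π) - z^2/(16*π^2)

lemma hfun_cont : Continuous hfun := by
  unfold hfun
  fun_prop

lemma integral_right : ∫ z in (0:ℝ)..π, hfun z = 11*π/48 := by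
  have hpi := Real.pi_pos
  have hcongr : EqOn hfun (fun z => (1/(2*π)) * z - (1/(16*π^2)) * z^2) (uIcc 0 π) := by
    intro z hz
    rw [uIcc_of_le (le_of_lt hpi), mem_Icc] at hz
    unfold hfun
    rw [abs_of_nonneg hz.1]
    ring
  rw [integral_congr hcongr]
  rw [integral_sub (f := fun x => 1/(2*π) * x) (g := fun x => 1/(16*π^2) * x^2)
    ((continuous_const.mul continuous_id').intervalIntegrable _ _)
    ((continuous_const.mul (continuous_pow 2)).intervalIntegrable _ _),
    intervalIntegral.integral_const_mul, intervalIntegral.integral_const_mul, integral_id,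
    integral_pow]
  field_simp
  ring

lemma integral_left : ∫ z in (-π)..(0:ℝ), hfun z = 11*π/48 := by
  have hpi := Real.pi_pos
  have hcongr : EqOn hfun (fun z => (-(1/(2*π))) * z - (1/(16*π^2)) * z^2) (uIcc (-π) 0) := by
    intro z hz
    rw [uIcc_of_le (by linarith), mem_Icc] at hz
    unfold hfun
    rw [abs_of_nonpos hz.2]
    ring
  rw [integral_congr hcongr]
  rw [integral_sub (f := fun x => -(1/(2*π)) * x) (g := fun x => 1/(16*π^2) * x^2)
    ((continuous_const.mul continuous_id').intervalIntegrable _ _)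
    ((continuous_const.mul (continuous_pow 2)).intervalIntegrable _ _),
    intervalIntegral.integral_const_mul, intervalIntegral.integral_const_mul, integral_id,
    integral_pow]
  field_simp
  ring

lemma integral_hfun_Ico : ∫ z in Ico (-π) π, hfun z = 11*π/24 := by
  rw [setIntegral_congr_set (Ico_ae_eq_Ioc (μ := (volume : Measure ℝ)))]
  rw [← intervalIntegral.integral_of_le (by linarith [Real.pi_pos])]
  rw [← intervalIntegral.integral_add_adjacent_intervals (b := 0)
    (hfun_cont.intervalIntegrable _ _) (hfun_cont.intervalIntegrable _ _),
    integral_left, integral_right]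
  ring

lemma lintegral_hfun_Ico :
    ∫⁻ z in Ico (-π) π, ENNReal.ofReal (hfun z) = ENNReal.ofReal (11*π/24) := by
  rw [← ofReal_integral_eq_lintegral_ofReal]
  · rw [integral_hfun_Ico]
  · exact (hfun_cont.integrableOn_Icc (a := -π) (b := π)).mono_set Ico_subset_Icc_self
  · refine (ae_restrict_iff' measurableSet_Ico).2 (ae_of_all _ fun z hz => ?_)
    have hpi := Real.pi_pos
    obtain ⟨h1, h2⟩ := hz
    have hza : |z| ≤ π := abs_le.2 ⟨h1, le_of_lt h2⟩
    have h3 : z^2 = |z| * |z| := by rw [sq]; exact (abs_mul_abs_self z).symm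
    show (0:ℝ) ≤ hfun z
    unfold hfun
    rw [h3, sub_nonneg, div_le_div_iff₀ (by positivity) (by positivity)]
    nlinarith [mul_le_mul_of_nonneg_left hza (abs_nonneg z), abs_nonneg z, hpi,
      mul_nonneg (abs_nonneg z) hpi.le]

lemma qq_eq_ofReal {z : ℝ} (hz : z ∈ Ico (-π) π) :
    qq z + qq z * (1 - qq z) = ENNReal.ofReal (hfun z) := by
  have hpi := Real.pi_pos
  obtain ⟨h1, h2⟩ := hz
  have hza : |z| ≤ π := abs_le.2 ⟨h1, le_of_lt h2⟩
  have hr0 : (0:ℝ) ≤ |z|/(4*π) := by positivity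
  have hr1 : |z|/(4*π) ≤ 1 := by
    rw [div_le_one (by positivity)]; linarith
  have h1m : (1 : ℝ≥0∞) - qq z = ENNReal.ofReal (1 - |z|/(4*π)) := by
    rw [ENNReal.ofReal_sub _ hr0, ENNReal.ofReal_one, qq]
  rw [h1m, qq, ← ENNReal.ofReal_mul hr0, ← ENNReal.ofReal_add hr0 (by nlinarith)]
  congr 1
  have h3 : z^2 = |z| * |z| := by rw [sq]; exact (abs_mul_abs_self z).symm
  unfold hfun
  rw [h3]
  field_simp
  linear_combination

lemma lintegral_G : ∫⁻ z, (qq z + qq z * (1 - qq z)) ∂unifM = 11/48 := by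
  rw [lintegral_unifM]
  rw [setLIntegral_congr_fun measurableSet_Ico (fun z hz => qq_eq_ofReal hz),
    lintegral_hfun_Ico]
  have hpi := Real.pi_pos
  rw [← ENNReal.ofReal_inv_of_pos Real.two_pi_pos, ← ENNReal.ofReal_mul (by positivity)]
  rw [show (2*π)⁻¹ * (11*π/24) = 11/48 by field_simp; ring]
  rw [ENNReal.ofReal_div_of_pos (by norm_num)]
  norm_num


/-- The branch-crossing event in coordinates `(b, (c, (a, d)))` corresponding to
`(θ k, θ (k+1), θ (k-1), θ (k+2))`. -/
def Sset : Set (ℝ × (ℝ × (ℝ × ℝ))) :=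
  {p | π < |wrapPi (p.1 - p.2.2.1) + wrapPi (p.2.1 - p.1)/2|
    ∨ π < |wrapPi (p.2.2.2 - p.2.1) + wrapPi (p.2.1 - p.1)/2|}

lemma measurableSet_Sset : MeasurableSet Sset := by
  have m1 : Measurable fun p : ℝ × (ℝ × (ℝ × ℝ)) =>
      wrapPi (p.1 - p.2.2.1) + wrapPi (p.2.1 - p.1)/2 :=
    (measurable_wrapPi.comp (measurable_fst.sub measurable_snd.snd.fst)).add
      ((measurable_wrapPi.comp (measurable_snd.fst.sub measurable_fst)).div_const _)
  have m2 : Measurable fun p : ℝ × (ℝ × (ℝ × ℝ)) =>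
      wrapPi (p.2.2.2 - p.2.1) + wrapPi (p.2.1 - p.1)/2 :=
    (measurable_wrapPi.comp (measurable_snd.snd.snd.sub measurable_snd.fst)).add
      ((measurable_wrapPi.comp (measurable_snd.fst.sub measurable_fst)).div_const _)
  exact (measurableSet_lt measurable_const m1.abs).union
    (measurableSet_lt measurable_const m2.abs)

lemma measure_Sset : (unifM.prod (unifM.prod (unifM.prod unifM))) Sset = 11/48 := by
  rw [Measure.prod_apply measurableSet_Sset]
  have hslice3 : ∀ b : ℝ, (unifM.prod (unifM.prod unifM)) (Prod.mk b ⁻¹' Sset) = 11/48 := by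
    intro b
    rw [Measure.prod_apply (measurable_prodMk_left measurableSet_Sset)]
    have hslice2 : ∀ c : ℝ, (unifM.prod unifM) (Prod.mk c ⁻¹' (Prod.mk b ⁻¹' Sset))
        = qq (wrapPi (c - b)) + qq (wrapPi (c - b)) * (1 - qq (wrapPi (c - b))) := by
      intro c
      set z := wrapPi (c - b) with hzdef
      have hz : z ∈ Ico (-π) π := wrapPi_mem_Ico _
      have hA : MeasurableSet {a : ℝ | π < |wrapPi (b - a) + z/2|} :=
        (measurable_wrapPi.comp (measurable_const.sub measurable_id)) (measurableSet_sZ z)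
      have hqA : unifM {a : ℝ | π < |wrapPi (b - a) + z/2|} = qq z := by
        rw [show {a : ℝ | π < |wrapPi (b - a) + z/2|}
            = {a : ℝ | wrapPi (b - a) ∈ {y : ℝ | π < |y + z/2|}} from rfl,
          unifM_preimage_wrap_sub b (measurableSet_sZ z), unifM_sZ hz]
        rfl
      rw [Measure.prod_apply
        (measurable_prodMk_left (measurable_prodMk_left measurableSet_Sset))]
      have hinner : ∀ a : ℝ, unifM (Prod.mk a ⁻¹' (Prod.mk c ⁻¹' (Prod.mk b ⁻¹' Sset)))
          = Set.indicator {a' : ℝ | π < |wrapPi (b - a') + z/2|} 1 a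
            + Set.indicator ({a' : ℝ | π < |wrapPi (b - a') + z/2|})ᶜ (fun _ => qq z) a := by
        intro a
        have hpre : (Prod.mk a ⁻¹' (Prod.mk c ⁻¹' (Prod.mk b ⁻¹' Sset)))
            = {d : ℝ | π < |wrapPi (b - a) + z/2| ∨ π < |wrapPi (d - c) + z/2|} := rfl
        rw [hpre]
        by_cases h1 : π < |wrapPi (b - a) + z/2|
        · have he : {d : ℝ | π < |wrapPi (b - a) + z/2| ∨ π < |wrapPi (d - c) + z/2|}
              = Set.univ := by ext d; simp [h1]
          rw [he, measure_univ]
          simp [Set.indicator, h1]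
        · have he : {d : ℝ | π < |wrapPi (b - a) + z/2| ∨ π < |wrapPi (d - c) + z/2|}
              = {d : ℝ | π < |wrapPi (d - c) + z/2|} := by ext d; simp [h1]
          rw [he,
            show {d : ℝ | π < |wrapPi (d - c) + z/2|}
              = {d : ℝ | wrapPi (d - c) ∈ {y : ℝ | π < |y + z/2|}} from rfl,
            unifM_preimage_wrap_add c (measurableSet_sZ z), unifM_sZ hz]
          simp [Set.indicator, h1, qq]
      simp_rw [hinner]
      rw [lintegral_add_left (measurable_one.indicator hA),
        lintegral_indicator_one hA,
        lintegral_indicator_const hA.compl,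
        hqA, prob_compl_eq_one_sub hA, hqA]
    simp_rw [hslice2]
    have hG : Measurable (fun z => qq z + qq z * (1 - qq z)) :=
      measurable_qq.add (measurable_qq.mul (measurable_const.sub measurable_qq))
    rw [lintegral_unifM_wrap_add b hG]
    exact lintegral_G
  simp_rw [hslice3]
  simp

end Aux

/-- For i.i.d. uniform initial angles on the ring (`N ≥ 4`) and a fixed edge
`(k,k+1)`, the probability that a midpoint update at `(k,k+1)` produces a branch-crossing,
i.e. that `|δ(k-1) + δ(k)/2| > π` or `|δ(k+1) + δ(k)/2| > π` where
`δ(i) = wrap_π(θ(i+1) - θ(i))`, equals `11/48`. -/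
theorem first_branch_crossing_probability
    (N : ℕ) [NeZero N] (hN : 4 ≤ N)
    {Ω : Type*} [MeasurableSpace Ω] (P : Measure Ω) [IsProbabilityMeasure P]
    (θ : ZMod N → Ω → ℝ) (hmeas : ∀ i, Measurable (θ i))
    (hindep : iIndepFun θ P)
    (hunif : ∀ i, pdf.IsUniform (θ i) (Set.Ico (-π) π) P)
    (k : ZMod N)
    (δ : ZMod N → Ω → ℝ)
    (hδ : ∀ i ω, δ i ω = wrapPi (θ (i + 1) ω - θ i ω)) :
    P {ω | π < |δ (k - 1) ω + δ k ω / 2| ∨ π < |δ (k + 1) ω + δ k ω / 2|} = 11 / 48 := by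
  classical
  have hmap : ∀ i, Measure.map (θ i) P = unifM := fun i => hunif i
  have hcast : ∀ a : ℕ, 0 < a → a < 4 → ((a : ZMod N) ≠ 0) := by
    intro a ha1 ha2 h
    rw [ZMod.natCast_eq_zero_iff] at h
    have := Nat.le_of_dvd ha1 h
    omega
  have h3 : ((3 : ℕ) : ZMod N) ≠ 0 := hcast 3 (by norm_num) (by norm_num)
  have h2 : ((2 : ℕ) : ZMod N) ≠ 0 := hcast 2 (by norm_num) (by norm_num)
  have h1 : ((1 : ℕ) : ZMod N) ≠ 0 := hcast 1 (by norm_num) (by norm_num)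
  have hA : k - 1 ≠ k + 2 := fun h => h3 (by push_cast; linear_combination -h)
  have hB : k - 1 ≠ k + 1 := fun h => h2 (by push_cast; linear_combination -h)
  have hC : k + 2 ≠ k + 1 := fun h => h1 (by push_cast; linear_combination h)
  have hD1 : k ≠ k + 1 := fun h => h1 (by push_cast; linear_combination -h)
  have hD2 : k ≠ k - 1 := fun h => h1 (by push_cast; linear_combination h)
  have hD3 : k ≠ k + 2 := fun h => h2 (by push_cast; linear_combination -h)
  -- joint law of the quadruple
  have h_cd : IndepFun (θ (k-1)) (θ (k+2)) P := hindep.indepFun hA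
  have law_cd : Measure.map (fun ω => (θ (k-1) ω, θ (k+2) ω)) P = unifM.prod unifM := by
    rw [(indepFun_iff_map_prod_eq_prod_map_map (hmeas _).aemeasurable
      (hmeas _).aemeasurable).mp h_cd, hmap, hmap]
  have h_b_cd : IndepFun (θ (k+1)) (fun ω => (θ (k-1) ω, θ (k+2) ω)) P :=
    (hindep.indepFun_prodMk hmeas (k-1) (k+2) (k+1) hB hC).symm
  have law_bcd : Measure.map (fun ω => (θ (k+1) ω, (θ (k-1) ω, θ (k+2) ω))) P
      = unifM.prod (unifM.prod unifM) := by
    rw [(indepFun_iff_map_prod_eq_prod_map_map (hmeas _).aemeasurable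
      ((hmeas _).prodMk (hmeas _)).aemeasurable).mp h_b_cd, hmap, law_cd]
  have h_a_bcd : IndepFun (θ k) (fun ω => (θ (k+1) ω, (θ (k-1) ω, θ (k+2) ω))) P := by
    have hd : Disjoint ({k} : Finset (ZMod N)) ({k+1, k-1, k+2} : Finset (ZMod N)) := by
      simp only [Finset.disjoint_left, Finset.mem_singleton, Finset.mem_insert]
      rintro x rfl
      push_neg
      exact ⟨hD1, hD2, by simpa using hD3⟩
    have base := hindep.indepFun_finset {k} ({k+1, k-1, k+2}) hd hmeas
    have hφ : Measurable fun v : (({k} : Finset (ZMod N)) → ℝ) =>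
        v ⟨k, Finset.mem_singleton_self k⟩ := measurable_pi_apply _
    have hψ : Measurable fun v : ((({k+1, k-1, k+2} : Finset (ZMod N))) → ℝ) =>
        (v ⟨k+1, by simp⟩, (v ⟨k-1, by simp⟩, v ⟨k+2, by simp⟩)) :=
      (measurable_pi_apply _).prodMk
        ((measurable_pi_apply _).prodMk (measurable_pi_apply _))
    exact base.comp hφ hψ
  have hV : Measurable fun ω => (θ k ω, (θ (k+1) ω, (θ (k-1) ω, θ (k+2) ω))) :=
    (hmeas k).prodMk ((hmeas _).prodMk ((hmeas _).prodMk (hmeas _)))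
  have law_abcd : Measure.map (fun ω => (θ k ω, (θ (k+1) ω, (θ (k-1) ω, θ (k+2) ω)))) P
      = unifM.prod (unifM.prod (unifM.prod unifM)) := by
    rw [(indepFun_iff_map_prod_eq_prod_map_map (hmeas k).aemeasurable
      ((hmeas _).prodMk ((hmeas _).prodMk (hmeas _))).aemeasurable).mp h_a_bcd,
      hmap, law_bcd]
  have e1 : k - 1 + 1 = k := by ring
  have e2 : k + 1 + 1 = k + 2 := by ring
  have hev : {ω | π < |δ (k - 1) ω + δ k ω / 2| ∨ π < |δ (k + 1) ω + δ k ω / 2|}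
      = (fun ω => (θ k ω, (θ (k+1) ω, (θ (k-1) ω, θ (k+2) ω)))) ⁻¹' Sset := by
    ext ω
    simp only [Set.mem_setOf_eq, Set.mem_preimage, hδ, Sset]
    rw [e1, e2]
  rw [hev, ← Measure.map_apply hV measurableSet_Sset, law_abcd, measure_Sset]
end

section
/- Let N ≥ 2 and let s ∈ ℝ^N satisfy ∑_{i=1}^N s(i) = 0. Then, with cyclic indices (N+1 ≡ 1), ∑_{i=1}^N (s(i) − s(i+1))² ≥ (1/N²)·∑_{i=1}^N s(i)². -/
/-!
Telescoping along the arc from `i` forward to `j` and Cauchy–Schwarz give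
`(s i - s j)² ≤ N·D`, where `D = ∑ₖ (s k - s (k+1))²`. For a zero-sum `s` the pair sum
`∑ᵢ ∑ⱼ (s i - s j)²` equals `2N ∑ᵢ (s i)²`, so `2N ∑ᵢ (s i)² ≤ N³ D`.
-/

open Finset

theorem Finset.sum_sum_sub_sq {ι R : Type*} [CommRing R] (s : Finset ι) (f : ι → R) :
    ∑ i ∈ s, ∑ j ∈ s, (f i - f j) ^ 2 = 2 * #s * ∑ i ∈ s, f i ^ 2 - 2 * (∑ i ∈ s, f i) ^ 2 := by
  simp only [sub_sq, sum_add_distrib, sum_sub_distrib, sum_const, nsmul_eq_mul, ← mul_sum,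
    ← sum_mul, sq (∑ i ∈ s, f i), mul_assoc]
  ring

namespace ZMod

theorem sum_range_natCast {N : ℕ} [NeZero N] {M : Type*} [AddCommMonoid M]
    (g : ZMod N → M) : ∑ t ∈ range N, g t = ∑ k, g k :=
  sum_bij' (fun t _ => (t : ZMod N)) (fun k _ => k.val) (fun _ _ => mem_univ _)
    (fun k _ => mem_range.2 k.val_lt) (fun _ ht => val_cast_of_lt (mem_range.1 ht))
    (fun k _ => natCast_zmod_val k) (fun _ _ => rfl)

theorem sq_sub_le_mul_sum_sq_sub_add_one {N : ℕ} [NeZero N] {R : Type*} [CommRing R]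
    [LinearOrder R] [IsStrictOrderedRing R] (s : ZMod N → R) (i j : ZMod N) :
    (s i - s j) ^ 2 ≤ N * ∑ k, (s k - s (k + 1)) ^ 2 := by
  set g : ZMod N → R := fun k => s k - s (k + 1)
  obtain ⟨m, hm, rfl⟩ : ∃ m < N, j = i + m :=
    ⟨(j - i).val, val_lt _, by rw [natCast_zmod_val, add_sub_cancel]⟩
  have telescope : s i - s (i + m) = ∑ t ∈ range m, g (i + t) := by
    simpa [g, add_assoc] using (sum_range_sub' (fun t : ℕ => s (i + t)) m).symm
  calc (s i - s (i + m)) ^ 2 ≤ m * ∑ t ∈ range m, g (i + t) ^ 2 := by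
        simpa only [telescope, card_range] using
          sq_sum_le_card_mul_sum_sq (s := range m) (f := fun t : ℕ => g (i + t))
    _ ≤ N * ∑ t ∈ range N, g (i + t) ^ 2 := by
        gcongr
    _ = N * ∑ k, g k ^ 2 := by
        rw [sum_range_natCast (fun k => g (i + k) ^ 2)]
        congr 1
        exact Equiv.sum_comp (Equiv.addLeft i) (fun k => g k ^ 2)

end ZMod

theorem ring_poincare_inequality_general
    (N : ℕ) [NeZero N]
    (s : ZMod N → ℝ) (hsum : ∑ i : ZMod N, s i = 0) :
    ∑ i : ZMod N, (s i - s (i + 1)) ^ 2 ≥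
      (1 / (N : ℝ) ^ 2) * ∑ i : ZMod N, (s i) ^ 2 := by
  set D := ∑ i : ZMod N, (s i - s (i + 1)) ^ 2
  have hN : (0 : ℝ) < N := by exact_mod_cast NeZero.pos N
  have pairs : ∑ i, ∑ j, (s i - s j) ^ 2 = N * (2 * ∑ i, s i ^ 2) := by
    rw [sum_sum_sub_sq, hsum, card_univ, ZMod.card]
    ring
  have pairs_le : ∑ i, ∑ j, (s i - s j) ^ 2 ≤ N * (N ^ 2 * D) :=
    calc ∑ i, ∑ j, (s i - s j) ^ 2 ≤ ∑ _i : ZMod N, ∑ _j : ZMod N, N * D :=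
          sum_le_sum fun i _ => sum_le_sum fun j _ => ZMod.sq_sub_le_mul_sum_sq_sub_add_one s i j
      _ = N * (N ^ 2 * D) := by
          simp only [sum_const, card_univ, ZMod.card, nsmul_eq_mul]
          ring
  have twice_le : 2 * ∑ i, s i ^ 2 ≤ N ^ 2 * D := le_of_mul_le_mul_left (pairs ▸ pairs_le) hN
  rw [ge_iff_le, one_div, inv_mul_le_iff₀ (by positivity)]
  linarith [show 0 ≤ ∑ i, s i ^ 2 by positivity]

/-- Discrete Poincaré-type inequality on the ring: if `s` has zero sum,
then `∑ᵢ (s(i) - s(i+1))² ≥ (1/N²) ∑ᵢ s(i)²` (cyclic indices). -/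
theorem ring_poincare_inequality
    (N : ℕ) [NeZero N] (hN : 2 ≤ N)
    (s : ZMod N → ℝ) (hsum : ∑ i : ZMod N, s i = 0) :
    ∑ i : ZMod N, (s i - s (i + 1)) ^ 2 ≥
      (1 / (N : ℝ) ^ 2) * ∑ i : ZMod N, (s i) ^ 2 :=
  ring_poincare_inequality_general N s hsum
end
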